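/- Gumbel-top-1 sampling correctness: if G₁, ..., Gₙ are independent standard Gumbel random variables and ℓ₁, ..., ℓₙ are real logits, then P(argmax_i (ℓᵢ + Gᵢ) = k) = exp(ℓₖ) / Σᵢ exp(ℓᵢ), i.e., the argmax of Gumbel-perturbed logits is distributed according to the softmax of the logits. -/

import Mathlib

/-!
Condition on `G k = x`: index `k` wins iff `G i < x + ℓ k - ℓ i` for every `i ≠ k`, an event of
probability `∏ i ≠ k, exp (-exp (ℓ i - ℓ k) * exp (-x)) = exp (-c * exp (-x))` with
`c = ∑ i ≠ k, exp (ℓ i - ℓ k)`. Integrating against the Gumbel density and substituting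
`u = exp (-x)` leaves `∫ u in (0, ∞), exp (-(1 + c) * u) = 1 / (1 + c)`, the softmax weight of `k`.
-/

open MeasureTheory Real Set
open scoped ENNReal

lemma lintegral_Ioi_exp_neg_mul {a : ℝ} (ha : 0 < a) (c : ℝ) :
    ∫⁻ u in Ioi c, ENNReal.ofReal (exp (-(a * u))) = ENNReal.ofReal (exp (-(a * c)) / a) := by
  have h := integral_exp_mul_Ioi (neg_lt_zero.2 ha) c
  simp only [neg_mul] at h
  rw [← ofReal_integral_eq_lintegral_ofReal _ (ae_of_all _ fun u => (exp_pos _).le)]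
  · rw [h, neg_div_neg_eq]
  · have hint := integrableOn_exp_mul_Ioi (neg_lt_zero.2 ha) c
    simp only [neg_mul] at hint
    exact hint

lemma setLIntegral_image_exp_neg {s : Set ℝ} (hs : MeasurableSet s) (g : ℝ → ℝ≥0∞) :
    ∫⁻ u in (fun t => exp (-t)) '' s, g u =
      ∫⁻ t in s, ENNReal.ofReal (exp (-t)) * g (exp (-t)) := by
  have hderiv : ∀ t ∈ s, HasDerivWithinAt (fun t => exp (-t)) (-exp (-t)) s t := fun t _ =>
    ((hasDerivAt_neg' t).exp.congr_deriv (by ring)).hasDerivWithinAt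
  rw [lintegral_image_eq_lintegral_abs_deriv_mul hs hderiv
    (exp_injective.comp neg_injective).injOn]
  simp only [abs_neg, abs_of_pos (exp_pos _)]

lemma image_exp_neg_Iic (x : ℝ) : (fun t => exp (-t)) '' Iic x = Ici (exp (-x)) := by
  rw [show (fun t => exp (-t)) = exp ∘ Neg.neg from rfl, image_comp, image_neg_Iic, image_exp_Ici]

lemma image_exp_neg_univ : (fun t => exp (-t)) '' univ = Ioi 0 := by
  rw [show (fun t => exp (-t)) = exp ∘ Neg.neg from rfl, image_comp, image_neg_eq_neg, neg_univ,
    image_univ, range_exp]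

noncomputable def gumbelPDF (t : ℝ) : ℝ≥0∞ := ENNReal.ofReal (exp (-(t + exp (-t))))

lemma gumbelPDF_mul_ofReal_exp (c t : ℝ) :
    gumbelPDF t * ENNReal.ofReal (exp (-(c * exp (-t)))) =
      ENNReal.ofReal (exp (-t)) * ENNReal.ofReal (exp (-((1 + c) * exp (-t)))) := by
  rw [gumbelPDF, ← ENNReal.ofReal_mul (exp_pos _).le, ← ENNReal.ofReal_mul (exp_pos _).le,
    ← exp_add, ← exp_add]
  ring_nf

lemma measurable_gumbelPDF : Measurable gumbelPDF := by
  unfold gumbelPDF; fun_prop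

noncomputable def gumbelMeasure : Measure ℝ := volume.withDensity gumbelPDF

lemma lintegral_exp_neg_mul_exp_neg_gumbelMeasure {c : ℝ} (hc : -1 < c) :
    ∫⁻ t, ENNReal.ofReal (exp (-(c * exp (-t)))) ∂gumbelMeasure = ENNReal.ofReal (1 / (1 + c)) := by
  rw [gumbelMeasure, lintegral_withDensity_eq_lintegral_mul _ measurable_gumbelPDF (by fun_prop)]
  simp only [Pi.mul_apply, gumbelPDF_mul_ofReal_exp]
  rw [← setLIntegral_univ, ← setLIntegral_image_exp_neg MeasurableSet.univ
    fun u => ENNReal.ofReal (exp (-((1 + c) * u))), image_exp_neg_univ,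
    lintegral_Ioi_exp_neg_mul (by linarith)]
  simp

instance : IsProbabilityMeasure gumbelMeasure where
  measure_univ := by
    simpa using lintegral_exp_neg_mul_exp_neg_gumbelMeasure (c := 0) (by norm_num)

lemma gumbelMeasure_Iic (x : ℝ) : gumbelMeasure (Iic x) = ENNReal.ofReal (exp (-exp (-x))) := by
  have hpdf (t : ℝ) := gumbelPDF_mul_ofReal_exp 0 t
  simp only [zero_mul, neg_zero, exp_zero, ENNReal.ofReal_one, mul_one, add_zero] at hpdf
  rw [gumbelMeasure, withDensity_apply _ measurableSet_Iic]
  simp only [hpdf]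
  rw [← setLIntegral_image_exp_neg measurableSet_Iic fun u => ENNReal.ofReal (exp (-(1 * u))),
    image_exp_neg_Iic, setLIntegral_congr Ioi_ae_eq_Ici.symm, lintegral_Ioi_exp_neg_mul one_pos]
  simp

instance : NullSingletonClass gumbelMeasure :=
  inferInstanceAs (NullSingletonClass (volume.withDensity gumbelPDF))

lemma gumbelMeasure_Iio (x : ℝ) : gumbelMeasure (Iio x) = ENNReal.ofReal (exp (-exp (-x))) := by
  rw [measure_congr Iio_ae_eq_Iic, gumbelMeasure_Iic]

lemma pi_setOf_forall_ne_add_lt {m : ℕ} (μ : Fin (m + 1) → Measure ℝ) [∀ i, SigmaFinite (μ i)]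
    (ℓ : Fin (m + 1) → ℝ) (k : Fin (m + 1)) :
    Measure.pi μ {g | ∀ i, i ≠ k → ℓ i + g i < ℓ k + g k} =
      ∫⁻ x, ∏ j, μ (k.succAbove j) (Iio (x + ℓ k - ℓ (k.succAbove j))) ∂μ k := by
  set A : Set (ℝ × (Fin m → ℝ)) := {p | ∀ j, p.2 j < p.1 + ℓ k - ℓ (k.succAbove j)}
  have hA : MeasurableSet A := by
    simp only [A]
    measurability
  have hpre : {g : Fin (m + 1) → ℝ | ∀ i, i ≠ k → ℓ i + g i < ℓ k + g k} =
      MeasurableEquiv.piFinSuccAbove (fun _ => ℝ) k ⁻¹' A := by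
    ext g
    simp [A, Fin.forall_iff_succAbove k, Fin.succAbove_ne, Fin.removeNth_apply, lt_sub_iff_add_lt,
      add_comm]
  have hslice (x : ℝ) : Prod.mk x ⁻¹' A = univ.pi fun j => Iio (x + ℓ k - ℓ (k.succAbove j)) := by
    ext g; simp [A]
  rw [hpre, (measurePreserving_piFinSuccAbove μ k).measure_preimage_equiv, Measure.prod_apply hA]
  simp only [hslice, Measure.pi_pi]

lemma prod_gumbelMeasure_Iio {ι : Type*} (s : Finset ι) (b : ι → ℝ) (x : ℝ) :
    ∏ i ∈ s, gumbelMeasure (Iio (x - b i)) =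
      ENNReal.ofReal (exp (-((∑ i ∈ s, exp (b i)) * exp (-x)))) := by
  simp only [gumbelMeasure_Iio]
  rw [← ENNReal.ofReal_prod_of_nonneg fun i _ => (exp_pos _).le, ← exp_sum, Finset.sum_mul,
    ← Finset.sum_neg_distrib]
  refine congrArg (ENNReal.ofReal ∘ exp) (Finset.sum_congr rfl fun i _ => ?_)
  rw [← exp_add]
  ring_nf

lemma one_div_one_add_sum_exp_sub {m : ℕ} (ℓ : Fin (m + 1) → ℝ) (k : Fin (m + 1)) :
    1 / (1 + ∑ j, exp (ℓ (k.succAbove j) - ℓ k)) = exp (ℓ k) / ∑ i, exp (ℓ i) := by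
  rw [Fin.sum_univ_succAbove _ k]
  simp only [exp_sub, ← Finset.sum_div]
  field_simp

lemma gumbelMeasure_pi_setOf_forall_ne_add_lt {m : ℕ} (ℓ : Fin (m + 1) → ℝ) (k : Fin (m + 1)) :
    Measure.pi (fun _ => gumbelMeasure) {g | ∀ i, i ≠ k → ℓ i + g i < ℓ k + g k} =
      ENNReal.ofReal (exp (ℓ k) / ∑ i, exp (ℓ i)) := by
  have hc : -1 < ∑ j, exp (ℓ (k.succAbove j) - ℓ k) :=
    neg_one_lt_zero.trans_le (Finset.sum_nonneg fun j _ => (exp_pos _).le)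
  simp only [pi_setOf_forall_ne_add_lt, ← sub_sub_eq_add_sub, prod_gumbelMeasure_Iio]
  rw [lintegral_exp_neg_mul_exp_neg_gumbelMeasure hc, one_div_one_add_sum_exp_sub]

lemma map_eq_gumbelMeasure {Ω : Type*} [MeasurableSpace Ω] {P : Measure Ω} [IsFiniteMeasure P]
    {X : Ω → ℝ} (hX : Measurable X)
    (hcdf : ∀ x, P {ω | X ω ≤ x} = ENNReal.ofReal (exp (-exp (-x)))) :
    P.map X = gumbelMeasure :=
  Measure.ext_of_Iic _ _ fun x => by
    rw [Measure.map_apply hX measurableSet_Iic, gumbelMeasure_Iic]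
    exact hcdf x

theorem stmt_13_general {Ω : Type*} [MeasurableSpace Ω] (P : Measure Ω)
    (n : ℕ) (G : Fin n → Ω → ℝ) (hmeas : ∀ i, Measurable (G i))
    (hindep : ProbabilityTheory.iIndepFun G P)
    (hcdf : ∀ (i : Fin n) (x : ℝ),
      P {ω | G i ω ≤ x} = ENNReal.ofReal (Real.exp (-Real.exp (-x))))
    (ℓ : Fin n → ℝ) (k : Fin n) :
    P {ω | ∀ i : Fin n, i ≠ k → ℓ i + G i ω < ℓ k + G k ω} =
      ENNReal.ofReal (Real.exp (ℓ k) / ∑ i : Fin n, Real.exp (ℓ i)) := by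
  obtain ⟨m, rfl⟩ := Nat.exists_eq_add_one_of_ne_zero k.pos.ne'
  have := hindep.isProbabilityMeasure
  have hjoint : P.map (fun ω i => G i ω) = Measure.pi fun _ => gumbelMeasure := by
    rw [hindep.map_fun_eq_pi_map fun i => (hmeas i).aemeasurable]
    simp only [map_eq_gumbelMeasure (hmeas _) (hcdf _)]
  rw [← gumbelMeasure_pi_setOf_forall_ne_add_lt, ← hjoint,
    Measure.map_apply (measurable_pi_lambda _ hmeas) (by measurability)]
  rfl

/-- Gumbel-top-1 sampling: if `G 1, …, G n` are i.i.d. standard Gumbel random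
variables (CDF `exp (-exp (-x))`) and `ℓ` are real logits, then the probability
that index `k` is the (a.s. unique) argmax of the perturbed logits `ℓ i + G i`
equals the softmax probability `exp (ℓ k) / ∑ i, exp (ℓ i)`. -/
theorem stmt_13 {Ω : Type*} [MeasurableSpace Ω] (P : Measure Ω)
    [IsProbabilityMeasure P] (n : ℕ) (hn : 0 < n)
    (G : Fin n → Ω → ℝ) (hmeas : ∀ i, Measurable (G i))
    (hindep : ProbabilityTheory.iIndepFun G P)
    (hcdf : ∀ (i : Fin n) (x : ℝ),
      P {ω | G i ω ≤ x} = ENNReal.ofReal (Real.exp (-Real.exp (-x))))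
    (ℓ : Fin n → ℝ) (k : Fin n) :
    P {ω | ∀ i : Fin n, i ≠ k → ℓ i + G i ω < ℓ k + G k ω} =
      ENNReal.ofReal (Real.exp (ℓ k) / ∑ i : Fin n, Real.exp (ℓ i)) :=
  stmt_13_general P n G hmeas hindep hcdf ℓ k
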